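/- arXiv:2212.12849 — 4 statements merged into one kernel-verified Lean document; each statement's English description precedes it below -/
import Mathlib

section
/- For every abelian group M, the sequence 0 → M → M_(p) ⊕ M[1/p] → M ⊗ ℚ → 0 is exact, where the first map sends m to (m⊗1, m⊗1) and the second sends (x, y) to the difference of their images in M ⊗ ℚ. -/
/-!
For `M = ℤ` the sequence `0 → ℤ → ℤ_(p) × ℤ[1/p] → ℚ → 0` is exact by elementary arithmetic:
a fraction whose denominator is both prime to `p` and a power of `p` is an integer, and a
fraction with denominator `p ^ k * n`, `p ∤ n`, splits by partial fractions into a fraction with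
denominator `n` plus one with denominator `p ^ k`. Tensoring with `M` keeps the sequence exact:
on the right since `M ⊗ -` is right exact, and on the left since `ℚ` is flat over `ℤ`.
-/

open scoped TensorProduct

/-- The subring `ℤ_(p) ⊆ ℚ` (the localization of `ℤ` at the prime `p`): the subring of `ℚ`
generated by the inverses of the integers not divisible by `p`. -/
def ZLocAt (p : ℕ) : Subring ℚ :=
  Subring.closure {x : ℚ | ∃ n : ℤ, ¬ ((p : ℤ) ∣ n) ∧ x * (n : ℚ) = 1}

/-- The subring `ℤ[1/p] ⊆ ℚ`. -/
def ZOneOver (p : ℕ) : Subring ℚ :=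
  Subring.closure {((p : ℚ))⁻¹}

/-- The map `M → M_(p) ⊕ M[1/p]`, `m ↦ (m ⊗ 1, m ⊗ 1)`. -/
noncomputable def fractureFst (p : ℕ) (M : Type*) [AddCommGroup M] :
    M →ₗ[ℤ] (M ⊗[ℤ] ↥(ZLocAt p)) × (M ⊗[ℤ] ↥(ZOneOver p)) :=
  LinearMap.prod
    ((TensorProduct.mk ℤ M ↥(ZLocAt p)).flip 1)
    ((TensorProduct.mk ℤ M ↥(ZOneOver p)).flip 1)

/-- The map `M_(p) ⊕ M[1/p] → M ⊗ ℚ`, `(x, y) ↦ x - y` (the difference of the images). -/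
noncomputable def fractureSnd (p : ℕ) (M : Type*) [AddCommGroup M] :
    (M ⊗[ℤ] ↥(ZLocAt p)) × (M ⊗[ℤ] ↥(ZOneOver p)) →ₗ[ℤ] M ⊗[ℤ] ℚ :=
  LinearMap.coprod
    (LinearMap.lTensor M ((ZLocAt p).subtype.toAddMonoidHom.toIntLinearMap))
    (- LinearMap.lTensor M ((ZOneOver p).subtype.toAddMonoidHom.toIntLinearMap))

def ratLocalization (S : Submonoid ℤ) : Subring ℚ where
  carrier := {x | ∃ n ∈ S, ∃ a : ℤ, x * n = a}
  zero_mem' := ⟨1, S.one_mem, 0, by simp⟩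
  one_mem' := ⟨1, S.one_mem, 1, by simp⟩
  add_mem' := by
    rintro x y ⟨n, hn, a, ha⟩ ⟨m, hm, b, hb⟩
    refine ⟨n * m, S.mul_mem hn hm, a * m + b * n, ?_⟩
    push_cast
    linear_combination (m : ℚ) * ha + (n : ℚ) * hb
  mul_mem' := by
    rintro x y ⟨n, hn, a, ha⟩ ⟨m, hm, b, hb⟩
    refine ⟨n * m, S.mul_mem hn hm, a * b, ?_⟩
    push_cast
    linear_combination (y * m) * ha + (a : ℚ) * hb
  neg_mem' := by
    rintro x ⟨n, hn, a, ha⟩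
    exact ⟨n, hn, -a, by push_cast; linear_combination -ha⟩

def coprimeSubmonoid (m : ℤ) : Submonoid ℤ where
  carrier := {n | IsCoprime m n}
  one_mem' := isCoprime_one_right
  mul_mem' := IsCoprime.mul_right

theorem Rat.exists_eq_intCast_of_mul_eq_intCast {x : ℚ} {n m a b : ℤ} (h : IsCoprime n m)
    (ha : x * n = a) (hb : x * m = b) : ∃ c : ℤ, x = c := by
  obtain ⟨u, v, huv⟩ := h
  refine ⟨u * a + v * b, ?_⟩
  have huv' : (u : ℚ) * n + v * m = 1 := by exact_mod_cast huv
  push_cast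
  linear_combination (-x) * huv' + (u : ℚ) * ha + (v : ℚ) * hb

theorem Rat.exists_div_mul_eq_div_add_div {n m : ℤ} (h : IsCoprime n m) (hn : n ≠ 0) (hm : m ≠ 0)
    (a : ℤ) : ∃ b c : ℤ, (a : ℚ) / (n * m) = b / n + c / m := by
  obtain ⟨u, v, huv⟩ := h
  refine ⟨a * v, a * u, ?_⟩
  have huv' : (u : ℚ) * n + v * m = 1 := by exact_mod_cast huv
  field_simp
  push_cast
  linear_combination (-(a : ℚ)) * huv'

section Fracture

variable {p : ℕ}

theorem inv_intCast_mem_ZLocAt {n : ℤ} (hn : ¬ (p : ℤ) ∣ n) : ((n : ℚ))⁻¹ ∈ ZLocAt p := by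
  refine Subring.subset_closure ⟨n, hn, inv_mul_cancel₀ (Int.cast_ne_zero.mpr ?_)⟩
  rintro rfl
  exact hn (dvd_zero _)

theorem inv_natCast_pow_mem_ZOneOver (k : ℕ) : ((p : ℚ) ^ k)⁻¹ ∈ ZOneOver p := by
  rw [← inv_pow]
  exact pow_mem (Subring.subset_closure (Set.mem_singleton _)) k

theorem ZLocAt_le_ratLocalization (hp : p.Prime) :
    ZLocAt p ≤ ratLocalization (coprimeSubmonoid p) := by
  rw [ZLocAt, Subring.closure_le]
  rintro x ⟨n, hn, hx⟩
  exact ⟨n, ((Nat.prime_iff_prime_int.mp hp).coprime_iff_not_dvd).mpr hn, 1, by simpa using hx⟩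

theorem ZOneOver_le_ratLocalization (hp : p ≠ 0) :
    ZOneOver p ≤ ratLocalization (Submonoid.powers (p : ℤ)) := by
  rw [ZOneOver, Subring.closure_le, Set.singleton_subset_iff]
  exact ⟨p, Submonoid.mem_powers _, 1, by simp [hp]⟩

theorem exists_intCast_eq_of_mem_ZLocAt_of_mem_ZOneOver (hp : p.Prime) {x : ℚ}
    (hx₁ : x ∈ ZLocAt p) (hx₂ : x ∈ ZOneOver p) : ∃ c : ℤ, x = c := by
  obtain ⟨n, hn, a, ha⟩ := ZLocAt_le_ratLocalization hp hx₁
  obtain ⟨_, ⟨k, rfl⟩, b, hb⟩ := ZOneOver_le_ratLocalization hp.ne_zero hx₂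
  exact Rat.exists_eq_intCast_of_mul_eq_intCast (IsCoprime.pow_right hn.symm) ha hb

theorem exists_sub_eq_of_mem_ZLocAt_of_mem_ZOneOver (hp : p.Prime) (q : ℚ) :
    ∃ x ∈ ZLocAt p, ∃ y ∈ ZOneOver p, x - y = q := by
  obtain ⟨k, n, hn, hden⟩ := Nat.exists_eq_pow_mul_and_not_dvd q.den_nz p hp.ne_one
  have hn' : ¬ (p : ℤ) ∣ n := by exact_mod_cast hn
  have hcop : IsCoprime (n : ℤ) ((p : ℤ) ^ k) :=
    (((Nat.prime_iff_prime_int.mp hp).coprime_iff_not_dvd).mpr hn').symm.pow_right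
  obtain ⟨b, c, hbc⟩ := Rat.exists_div_mul_eq_div_add_div hcop
    (by rintro ⟨⟩; exact hn' (dvd_zero _)) (pow_ne_zero _ (by exact_mod_cast hp.ne_zero)) q.num
  refine ⟨b / n, ?_, -(c / p ^ k), ?_, ?_⟩
  · rw [div_eq_mul_inv]
    exact mul_mem (intCast_mem _ b) (inv_intCast_mem_ZLocAt hn')
  · rw [div_eq_mul_inv]
    exact neg_mem (mul_mem (intCast_mem _ c) (inv_natCast_pow_mem_ZOneOver k))
  · rw [sub_neg_eq_add, ← Rat.num_div_den q, hden]
    push_cast at hbc ⊢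
    rw [mul_comm, hbc]

variable (p)

noncomputable def intFractureFst : ℤ →ₗ[ℤ] ↥(ZLocAt p) × ↥(ZOneOver p) :=
  (Algebra.linearMap ℤ ↥(ZLocAt p)).prod (Algebra.linearMap ℤ ↥(ZOneOver p))

noncomputable def intFractureSnd : ↥(ZLocAt p) × ↥(ZOneOver p) →ₗ[ℤ] ℚ :=
  LinearMap.coprod ((ZLocAt p).subtype.toAddMonoidHom.toIntLinearMap)
    (- (ZOneOver p).subtype.toAddMonoidHom.toIntLinearMap)

@[simp]
theorem intFractureFst_apply (n : ℤ) :
    intFractureFst p n = ((n : ↥(ZLocAt p)), (n : ↥(ZOneOver p))) := by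
  simp [intFractureFst]

@[simp]
theorem intFractureSnd_apply (x : ↥(ZLocAt p) × ↥(ZOneOver p)) :
    intFractureSnd p x = (x.1 : ℚ) - x.2 := by
  simp [intFractureSnd, sub_eq_add_neg]

theorem intFractureFst_injective : Function.Injective (intFractureFst p) := by
  intro m n h
  simpa using congrArg (fun x ↦ (x.1 : ℚ)) h

variable {p}

theorem intFracture_exact (hp : p.Prime) :
    Function.Exact (intFractureFst p) (intFractureSnd p) := by
  rintro ⟨x, y⟩
  rw [intFractureSnd_apply, sub_eq_zero]
  constructor
  · intro hxy
    obtain ⟨c, hc⟩ := exists_intCast_eq_of_mem_ZLocAt_of_mem_ZOneOver hp x.2 (hxy ▸ y.2)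
    exact ⟨c, by ext <;> simp_all⟩
  · rintro ⟨n, hn⟩
    simp only [intFractureFst_apply, Prod.mk.injEq] at hn
    simp [← hn.1, ← hn.2]

theorem intFractureSnd_surjective (hp : p.Prime) : Function.Surjective (intFractureSnd p) := by
  intro q
  obtain ⟨x, hx, y, hy, hxy⟩ := exists_sub_eq_of_mem_ZLocAt_of_mem_ZOneOver hp q
  exact ⟨(⟨x, hx⟩, ⟨y, hy⟩), by simpa using hxy⟩

variable (p) (M : Type*) [AddCommGroup M]

theorem fractureFst_eq :
    fractureFst p M = (TensorProduct.prodRight ℤ ℤ M _ _).toLinearMap ∘ₗ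
      (intFractureFst p).lTensor M ∘ₗ (TensorProduct.rid ℤ M).symm.toLinearMap := by
  refine LinearMap.ext fun m ↦ ?_
  simp only [LinearMap.coe_comp, LinearEquiv.coe_coe, Function.comp_apply,
    TensorProduct.rid_symm_apply, LinearMap.lTensor_tmul, intFractureFst_apply, Int.cast_one,
    TensorProduct.prodRight_tmul]
  rfl

theorem fractureSnd_eq :
    fractureSnd p M =
      (intFractureSnd p).lTensor M ∘ₗ (TensorProduct.prodRight ℤ ℤ M _ _).symm.toLinearMap := by
  refine (LinearEquiv.eq_comp_toLinearMap_symm _ _).mpr (TensorProduct.ext' fun m x ↦ ?_)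
  change m ⊗ₜ[ℤ] (x.1 : ℚ) + -(m ⊗ₜ[ℤ] (x.2 : ℚ)) = m ⊗ₜ[ℤ] ((x.1 : ℚ) + -(x.2 : ℚ))
  rw [TensorProduct.tmul_add, TensorProduct.tmul_neg]

end Fracture

/-- The arithmetic fracture square: for every abelian group `M`, the sequence
`0 → M → M_(p) ⊕ M[1/p] → M ⊗ ℚ → 0` is exact. -/
theorem statement0 (p : ℕ) (hp : p.Prime) (M : Type*) [AddCommGroup M] :
    Function.Injective (fractureFst p M) ∧
    Function.Exact (fractureFst p M) (fractureSnd p M) ∧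
    Function.Surjective (fractureSnd p M) := by
  have hexact := intFracture_exact hp
  have hsurj := intFractureSnd_surjective hp
  have hinj := LinearMap.lTensor_injective_of_exact_of_flat _ hsurj _
    (intFractureFst_injective p) hexact M
  rw [fractureFst_eq, fractureSnd_eq]
  refine ⟨?_, ?_, ?_⟩
  · exact (TensorProduct.prodRight ℤ ℤ M _ _).injective.comp
      (hinj.comp (TensorProduct.rid ℤ M).symm.injective)
  · exact (LinearEquiv.conj_exact_iff_exact _ _ _).mpr
      (LinearEquiv.precomp_exact_iff_exact.mpr (lTensor_exact M hexact hsurj))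
  · exact (LinearMap.lTensor_surjective M hsurj).comp
      (TensorProduct.prodRight ℤ ℤ M _ _).symm.surjective
end

section
/- Let A be a Noetherian commutative ring, a ∈ A, and M a finitely generated A-module. Let M̂ = lim_n M/aⁿM denote the a-adic completion. Then the natural square with corners M, M̂, M[1/a], M̂[1/a] is a pullback: the map from M to the set of pairs (x, y) ∈ M̂ × M[1/a] having the same image in M̂[1/a] is a bijection. -/
/-!
Over a Noetherian ring the `a`-power torsion of `M` is killed by a single power `a ^ c`, and by
Artin–Rees the same `a ^ c` kills the `a`-power torsion of `M̂`.

Uniqueness: an element of `M` vanishing in `M̂` lies in `a ^ c M`, so if it is also `a`-power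
torsion it is zero. Existence: a compatible pair amounts to `x ∈ M̂` and `m₁ ∈ M` with
`a ^ n x = m₁` in `M̂`. Write `x = m₂ + a ^ (n + c) z` with `m₂ ∈ M`; then
`m₁ - a ^ n m₂ ∈ a ^ (2n + c) M̂ ∩ M = a ^ (2n + c) M`, say it is `a ^ (2n + c) m₃`, and
`m = m₂ + a ^ (n + c) m₃` works, because `x - m` is `a ^ (n + c)` times an `a`-power torsion
element of `M̂`.
-/

section

variable {A : Type*} [CommRing A] {M : Type*} [AddCommGroup M] [Module A M]
  {N : Type*} [AddCommGroup N] [Module A N]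

theorem Submodule.mem_span_singleton_pow_smul_top {a : A} {n : ℕ} {x : M} :
    x ∈ (Ideal.span {a}) ^ n • (⊤ : Submodule A M) ↔ ∃ y, a ^ n • y = x := by
  simp [Ideal.span_singleton_pow, Submodule.ideal_span_singleton_smul,
    Submodule.mem_smul_pointwise_iff_exists]

theorem exists_pow_torsion_bound [IsNoetherianRing A] [Module.Finite A M] (a : A) :
    ∃ c : ℕ, ∀ (t : ℕ) (z : M), a ^ t • z = 0 → a ^ c • z = 0 := by
  have hmono : Monotone fun t : ℕ ↦ Submodule.torsionBy A M (a ^ t) := fun t t' h z hz ↦ by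
    simp only [Submodule.mem_torsionBy_iff] at hz ⊢
    rw [← Nat.sub_add_cancel h, pow_add, mul_smul, hz, smul_zero]
  obtain ⟨c, hc⟩ := monotone_stabilizes_iff_noetherian.mpr inferInstance ⟨_, hmono⟩
  exact ⟨c, fun t z hz ↦ (hc (max t c) (le_max_right _ _)).ge
    (hmono (le_max_left _ _) ((Submodule.mem_torsionBy_iff _ _).mpr hz))⟩

namespace AdicCompletion

variable {I : Ideal A}

theorem of_mem_pow_smul_top_iff (hI : I.FG) {n : ℕ} {m : M} :
    of I M m ∈ I ^ n • (⊤ : Submodule A (AdicCompletion I M)) ↔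
      m ∈ I ^ n • (⊤ : Submodule A M) := by
  rw [pow_smul_top_eq_ker_eval hI, LinearMap.mem_ker, eval_of, Submodule.mkQ_apply,
    Submodule.Quotient.mk_eq_zero]

theorem exists_sub_of_mem_pow_smul_top (hI : I.FG) (x : AdicCompletion I M) (n : ℕ) :
    ∃ m, x - of I M m ∈ I ^ n • (⊤ : Submodule A (AdicCompletion I M)) := by
  obtain ⟨m, hm⟩ := Submodule.Quotient.mk_surjective _ (eval I M n x)
  refine ⟨m, ?_⟩
  rw [pow_smul_top_eq_ker_eval hI, LinearMap.mem_ker, map_sub, eval_of, Submodule.mkQ_apply, hm,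
    sub_self]

theorem pow_smul_eq_zero_of_pow_smul_eq_zero [IsNoetherianRing A] [Module.Finite A M]
    {r : A} {c : ℕ} (hc : ∀ (t : ℕ) (z : M), r ^ t • z = 0 → r ^ c • z = 0) {t : ℕ}
    {w : AdicCompletion I M} (hw : r ^ t • w = 0) : r ^ c • w = 0 := by
  obtain ⟨k, hk⟩ := I.exists_pow_inf_eq_pow_smul (Ideal.span {r ^ t} • ⊤ : Submodule A M)
  ext n
  obtain ⟨m, hm⟩ := Submodule.Quotient.mk_surjective _ (w.val (n + k))
  have hmem : r ^ t • m ∈ I ^ (n + k) • ⊤ ⊓ (Ideal.span {r ^ t} • ⊤ : Submodule A M) := by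
    refine ⟨(Submodule.Quotient.mk_eq_zero _).mp ?_,
      Submodule.smul_mem_smul (Ideal.mem_span_singleton_self _) trivial⟩
    rw [Submodule.Quotient.mk_smul, hm, ← val_smul_apply, hw, val_zero_apply]
  -- Artin–Rees: `I ^ (n + k) M ∩ r ^ t M ⊆ I ^ n r ^ t M`.
  rw [hk _ (Nat.le_add_left k n), Nat.add_sub_cancel] at hmem
  replace hmem := Submodule.smul_mono le_rfl inf_le_right hmem
  rw [← Submodule.smul_assoc, smul_eq_mul, mul_comm, ← smul_eq_mul, Submodule.smul_assoc,
    Submodule.ideal_span_singleton_smul, Submodule.mem_smul_pointwise_iff_exists] at hmem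
  obtain ⟨v, hv, hvm⟩ := hmem
  have hrc : r ^ c • m = r ^ c • v := by
    rw [← sub_eq_zero, ← smul_sub]
    exact hc t _ (by rw [smul_sub, hvm, sub_self])
  rw [val_zero_apply, ← val_apply_mem_smul_top_iff I (Nat.le_add_right n k), val_smul_apply, ← hm,
    ← Submodule.Quotient.mk_smul, hrc]
  exact Submodule.smul_top_le_comap_smul_top _ (Submodule.mkQ _) (Submodule.smul_mem _ _ hv)

section Principal

variable {a : A} {c : ℕ} (hc : ∀ (t : ℕ) (z : M), a ^ t • z = 0 → a ^ c • z = 0)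
include hc

theorem eq_zero_of_of_eq_zero_of_pow_smul_eq_zero {t : ℕ} {m : M}
    (h₀ : of (Ideal.span {a}) M m = 0) (ht : a ^ t • m = 0) : m = 0 := by
  have hI : (Ideal.span {a}).FG := Submodule.fg_span_singleton a
  have hm : of (Ideal.span {a}) M m ∈ Ideal.span {a} ^ c • (⊤ : Submodule A _) := h₀ ▸ zero_mem _
  obtain ⟨e, rfl⟩ := Submodule.mem_span_singleton_pow_smul_top.mp
    ((of_mem_pow_smul_top_iff hI).mp hm)
  rw [smul_smul, ← pow_add] at ht
  exact hc _ _ ht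

theorem exists_of_eq_of_pow_smul_eq_of [IsNoetherianRing A] [Module.Finite A M] {n : ℕ}
    {x : AdicCompletion (Ideal.span {a}) M} {m₁ : M} (h : a ^ n • x = of _ M m₁) :
    ∃ m, of _ M m = x ∧ a ^ n • m = m₁ := by
  have hI : (Ideal.span {a}).FG := Submodule.fg_span_singleton a
  obtain ⟨m₂, hm₂⟩ := exists_sub_of_mem_pow_smul_top hI x (n + c)
  obtain ⟨z, hz⟩ := Submodule.mem_span_singleton_pow_smul_top.mp hm₂
  have hm₁ : of _ M (m₁ - a ^ n • m₂) = a ^ (n + (n + c)) • z := by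
    rw [map_sub, ← h, map_smul, ← smul_sub, ← hz, smul_smul, ← pow_add]
  obtain ⟨m₃, hm₃⟩ := Submodule.mem_span_singleton_pow_smul_top.mp
    ((of_mem_pow_smul_top_iff hI).mp
      (hm₁ ▸ Submodule.mem_span_singleton_pow_smul_top.mpr ⟨z, rfl⟩))
  refine ⟨m₂ + a ^ (n + c) • m₃, ?_, ?_⟩
  · have hz₀ : a ^ (n + (n + c)) • (z - of _ M m₃) = 0 := by
      rw [smul_sub, ← hm₁, ← map_smul, hm₃, sub_self]
    calc of _ M (m₂ + a ^ (n + c) • m₃) = x - a ^ n • a ^ c • (z - of _ M m₃) := by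
          rw [← mul_smul, ← pow_add, smul_sub, hz, map_add, map_smul]; abel
      _ = x := by rw [pow_smul_eq_zero_of_pow_smul_eq_zero hc hz₀, smul_zero, sub_zero]
  · rw [smul_add, smul_smul, ← pow_add, hm₃]; abel

end Principal

end AdicCompletion

open LocalizedModule in
theorem LocalizedModule.existsUnique_of_mkLinearMap_eq_map {a : A} {f : M →ₗ[A] N}
    (h_inj : ∀ (t : ℕ) (m : M), f m = 0 → a ^ t • m = 0 → m = 0)
    (h_lift : ∀ (n : ℕ) (x : N) (m₁ : M), a ^ n • x = f m₁ → ∃ m, f m = x ∧ a ^ n • m = m₁)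
    (x : N) (y : LocalizedModule (Submonoid.powers a) M)
    (hxy : mkLinearMap (Submonoid.powers a) N x = map (Submonoid.powers a) f y) :
    ∃! m : M, f m = x ∧ mkLinearMap (Submonoid.powers a) M m = y := by
  induction y using LocalizedModule.induction_on with | h m₀ s => ?_
  obtain ⟨s, k, rfl⟩ := s
  rw [mkLinearMap_apply, map_mk, mk_eq] at hxy
  obtain ⟨⟨_, j, rfl⟩, hj⟩ := hxy
  simp only [Submonoid.smul_def, one_smul, smul_smul, ← pow_add, ← map_smul] at hj
  obtain ⟨m, hfm, ham⟩ := h_lift _ x _ hj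
  have hym :
      mkLinearMap (Submonoid.powers a) M m = mk m₀ (⟨a ^ k, k, rfl⟩ : Submonoid.powers a) := by
    rw [mkLinearMap_apply, mk_eq]
    exact ⟨⟨a ^ j, j, rfl⟩, by simpa [Submonoid.smul_def, smul_smul, ← pow_add] using ham⟩
  refine ⟨m, ⟨hfm, hym⟩, fun m' ⟨hfm', hym'⟩ ↦ ?_⟩
  obtain ⟨⟨_, t, rfl⟩, ht⟩ := (IsLocalizedModule.eq_iff_exists (Submonoid.powers a) _).mp
    (hym'.trans hym.symm)
  simp only [Submonoid.smul_def] at ht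
  rw [← sub_eq_zero]
  exact h_inj t _ (by rw [map_sub, hfm, hfm', sub_self]) (by rw [smul_sub, ht, sub_self])

end

/-- Beauville–Laszlo type gluing: for a Noetherian ring `A`, `a ∈ A`, and a finitely
generated `A`-module `M`, the square with corners `M`, `M̂` (the `a`-adic completion),
`M[1/a]` and `M̂[1/a]` is a pullback: the map from `M` to the set of pairs
`(x, y) ∈ M̂ × M[1/a]` with the same image in `M̂[1/a]` is a bijection. -/
theorem statement2 (A : Type*) [CommRing A] [IsNoetherianRing A] (a : A)
    (M : Type*) [AddCommGroup M] [Module A M] [Module.Finite A M] :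
    (∀ m : M,
      LocalizedModule.mkLinearMap (Submonoid.powers a) (AdicCompletion (Ideal.span {a}) M)
          (AdicCompletion.of (Ideal.span {a}) M m) =
        LocalizedModule.map (Submonoid.powers a) (AdicCompletion.of (Ideal.span {a}) M)
          (LocalizedModule.mkLinearMap (Submonoid.powers a) M m)) ∧
    ∀ (x : AdicCompletion (Ideal.span {a}) M)
      (y : LocalizedModule (Submonoid.powers a) M),
      LocalizedModule.mkLinearMap (Submonoid.powers a) (AdicCompletion (Ideal.span {a}) M) x =
        LocalizedModule.map (Submonoid.powers a) (AdicCompletion.of (Ideal.span {a}) M) y →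
      ∃! m : M,
        AdicCompletion.of (Ideal.span {a}) M m = x ∧
        LocalizedModule.mkLinearMap (Submonoid.powers a) M m = y := by
  obtain ⟨c, hc⟩ := exists_pow_torsion_bound (M := M) a
  refine ⟨fun m ↦ (LocalizedModule.map_mk _ _ _ _).symm, ?_⟩
  exact LocalizedModule.existsUnique_of_mkLinearMap_eq_map
    (fun _ _ ↦ AdicCompletion.eq_zero_of_of_eq_zero_of_pow_smul_eq_zero hc)
    (fun _ _ _ ↦ AdicCompletion.exists_of_eq_of_pow_smul_eq_of hc)
end

section
/- Let p be a prime and (M_n)_{n≥1} an inverse system of abelian groups with transition maps π_n : M_{n+1} → M_n such that for every n: pⁿ·M_n = 0, π_n is surjective, and ker(π_n) = pⁿ·M_{n+1}. Let M = lim_n M_n. Then for each n the projection M → M_n is surjective with kernel pⁿM, inducing an isomorphism M/pⁿM ≅ M_n; consequently M is p-adically complete, i.e., the natural map M → lim_n M/pⁿM is an isomorphism. -/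
/-- The inverse limit of a tower of abelian groups, as an additive subgroup of the
product: the subgroup of compatible sequences. -/
def towerLimit (M : ℕ → Type*) [∀ n, AddCommGroup (M n)]
    (π : ∀ n, M (n + 1) →+ M n) : AddSubgroup (∀ n, M n) where
  carrier := {x | ∀ n, π n (x (n + 1)) = x n}
  zero_mem' := by intro n; simp
  add_mem' := by intro a b ha hb n; simp [ha n, hb n]
  neg_mem' := by intro a ha n; simp [ha n]

section aux

variable {M : ℕ → Type*} [∀ n, AddCommGroup (M n)] (π : ∀ n, M (n + 1) →+ M n)

/-- Composite transition map `M t →+ M s` for `s ≤ t`. -/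
def chain (s : ℕ) {t : ℕ} (h : s ≤ t) : M t →+ M s :=
  Nat.leRecOn h (fun {k} f => f.comp (π k)) (AddMonoidHom.id (M s))

lemma chain_self (s : ℕ) (h : s ≤ s) (a : M s) : chain π s h a = a := by
  have : chain π s h = AddMonoidHom.id (M s) := Nat.leRecOn_self _
  simp [this]

lemma chain_succ (s t : ℕ) (h1 : s ≤ t) (h2 : s ≤ t + 1) (a : M (t + 1)) :
    chain π s h2 a = chain π s h1 (π t a) := by
  have : chain π s h2 = (chain π s h1).comp (π t) := Nat.leRecOn_succ h1 _
  simp [this]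

lemma chain_comm (s t : ℕ) (h : s + 1 ≤ t) (a : M t) :
    π s (chain π (s + 1) h a) = chain π s ((Nat.le_succ s).trans h) a := by
  induction t, h using Nat.le_induction with
  | base =>
      rw [chain_self, chain_succ π s s le_rfl ((Nat.le_succ s).trans le_rfl) a,
        chain_self]
  | succ t ht ih =>
      rw [chain_succ π (s+1) t ht _ a, chain_succ π s t ((Nat.le_succ s).trans ht) _ a, ih]

lemma chain_limit {x : ∀ k, M k} (hx : x ∈ towerLimit M π) (s t : ℕ) (h : s ≤ t) :
    chain π s h (x t) = x s := by
  induction t, h using Nat.le_induction with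
  | base => rw [chain_self]
  | succ t ht ih => rw [chain_succ π s t ht _ (x (t+1)), hx t, ih]

lemma tower_proj_surj (hsurj : ∀ n, Function.Surjective (π n)) (n : ℕ) (a : M n) :
    ∃ x ∈ towerLimit M π, x n = a := by
  let g : ∀ k, M (n + k) := fun k => Nat.rec a (fun k gk => (hsurj (n + k) gk).choose) k
  have hg : ∀ k, π (n + k) (g (k + 1)) = g k := fun k => (hsurj (n + k) (g k)).choose_spec
  refine ⟨fun m => chain π m (Nat.le_add_left m n) (g m), fun m => ?_, ?_⟩
  · have e1 : π m (chain π (m + 1) (t := (n + m) + 1) (by omega) (g (m + 1)))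
        = chain π m (t := (n + m) + 1) (by omega) (g (m + 1)) :=
      chain_comm π m ((n + m) + 1) (by omega) (g (m + 1))
    have e2 : chain π m (t := (n + m) + 1) (by omega) (g (m + 1))
        = chain π m (t := n + m) (by omega) (π (n + m) (g (m + 1))) :=
      chain_succ π m (n + m) (by omega) (by omega) (g (m + 1))
    have e3 : chain π m (t := n + m) (by omega) (π (n + m) (g (m + 1)))
        = chain π m (t := n + m) (by omega) (g m) := by rw [hg m]
    exact e1.trans (e2.trans e3)
  · have key : ∀ k (h : n ≤ n + k), chain π n h (g k) = a := by
      intro k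
      induction k with
      | zero => intro h; exact chain_self π n h a
      | succ k ih =>
          intro h
          have e1 : chain π n (t := (n + k) + 1) h (g (k + 1))
              = chain π n (t := n + k) (by omega) (π (n + k) (g (k + 1))) :=
            chain_succ π n (n + k) (by omega) h (g (k + 1))
          have e2 : chain π n (t := n + k) (by omega) (π (n + k) (g (k + 1)))
              = chain π n (t := n + k) (by omega) (g k) := by rw [hg k]
          exact e1.trans (e2.trans (ih _))
    exact key n _

lemma tower_divide {p : ℕ}
    (htor : ∀ (n : ℕ) (x : M n), p ^ (n + 1) • x = 0)
    (hsurj : ∀ n, Function.Surjective (π n))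
    (hker : ∀ (n : ℕ) (y : M (n + 1)), π n y = 0 ↔ ∃ z : M (n + 1), y = p ^ (n + 1) • z)
    (n : ℕ) (x : ∀ k, M k) (hx : x ∈ towerLimit M π) (h0 : x n = 0) :
    ∃ y ∈ towerLimit M π, ∀ m, p ^ (n + 1) • y m = x m := by
  have base : {v : M (n + 1 + 0) // p ^ (n + 1) • v = x (n + 1 + 0)} := by
    have h1 : π n (x (n + 1)) = 0 := by rw [hx n, h0]
    exact ⟨((hker n (x (n + 1))).mp h1).choose, ((hker n (x (n + 1))).mp h1).choose_spec.symm⟩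
  have key : ∀ k (a : {v : M (n + 1 + k) // p ^ (n + 1) • v = x (n + 1 + k)}),
      ∃ b : {v : M (n + 1 + (k + 1)) // p ^ (n + 1) • v = x (n + 1 + (k + 1))},
        ∃ z : M (n + 1 + k), π (n + 1 + k) b.1 = a.1 - p ^ (k + 1) • z := by
    intro k a
    obtain ⟨w0, hw0⟩ := hsurj (n + 1 + k) a.1
    let w : M (n + 1 + (k + 1)) := w0
    have hw : π (n + 1 + k) w = a.1 := hw0
    have hx' : π (n + 1 + k) (x (n + 1 + (k + 1))) = x (n + 1 + k) := hx (n + 1 + k)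
    have h1 : π (n + 1 + k) (p ^ (n + 1) • w - x (n + 1 + (k + 1))) = 0 := by
      rw [map_sub, map_nsmul, hw, a.2, hx', sub_self]
    obtain ⟨z0, hz0⟩ := (hker (n + 1 + k) _).mp h1
    let z : M (n + 1 + (k + 1)) := z0
    have hz : p ^ (n + 1) • w - x (n + 1 + (k + 1)) = p ^ (n + 1 + k + 1) • z := hz0
    refine ⟨⟨w - p ^ (k + 1) • z, ?_⟩, π (n + 1 + k) z, ?_⟩
    · have hpow : (p : ℕ) ^ (n + 1) * p ^ (k + 1) = p ^ (n + 1 + k + 1) := by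
        rw [← pow_add]; ring_nf
      rw [smul_sub, smul_smul, hpow, ← hz]; abel
    · show π (n + 1 + k) (w - p ^ (k + 1) • z) = a.1 - p ^ (k + 1) • π (n + 1 + k) z
      rw [map_sub, map_nsmul, hw]
  let u : ∀ k, {v : M (n + 1 + k) // p ^ (n + 1) • v = x (n + 1 + k)} :=
    fun k => Nat.rec base (fun k a => (key k a).choose) k
  have hu : ∀ k, ∃ z : M (n + 1 + k),
      π (n + 1 + k) (u (k + 1)).1 = (u k).1 - p ^ (k + 1) • z :=
    fun k => (key k (u k)).choose_spec
  refine ⟨fun m => chain π m (t := n + 1 + m) (by omega) (u m).1, fun m => ?_, fun m => ?_⟩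
  · obtain ⟨z, hz⟩ := hu m
    have e1 : π m (chain π (m + 1) (t := (n + 1 + m) + 1) (by omega) (u (m + 1)).1)
        = chain π m (t := (n + 1 + m) + 1) (by omega) (u (m + 1)).1 :=
      chain_comm π m ((n + 1 + m) + 1) (by omega) (u (m + 1)).1
    have e2 : chain π m (t := (n + 1 + m) + 1) (by omega) (u (m + 1)).1
        = chain π m (t := n + 1 + m) (by omega) (π (n + 1 + m) (u (m + 1)).1) :=
      chain_succ π m (n + 1 + m) (by omega) (by omega) (u (m + 1)).1
    have e3 : chain π m (t := n + 1 + m) (by omega) (π (n + 1 + m) (u (m + 1)).1)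
        = chain π m (t := n + 1 + m) (by omega) (u m).1 := by
      rw [hz, map_sub, map_nsmul, htor m, sub_zero]
    exact e1.trans (e2.trans e3)
  · rw [← map_nsmul, (u m).2]
    exact chain_limit π hx m (n + 1 + m) (by omega)

end aux

/-- Gluing a tower of `ℤ/pⁿ`-modules.  Here `M n` plays the role of `M_{n+1}` of the
informal statement, so the tower is `(M_{n})_{n ≥ 1}` with `p^{n} M_{n} = 0`, surjective
transition maps, and `ker(M_{n+1} → M_{n}) = pⁿ M_{n+1}`.  Then, with `M = lim_n M_n`:
each projection `M → M_n` is surjective with kernel `pⁿM` (so `M/pⁿM ≅ M_n`), and `M` is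
`p`-adically complete (the map `M → lim_n M/pⁿM` is injective and surjective). -/
theorem statement6 (p : ℕ) (hp : p.Prime) (M : ℕ → Type*) [∀ n, AddCommGroup (M n)]
    (π : ∀ n, M (n + 1) →+ M n)
    (htor : ∀ (n : ℕ) (x : M n), p ^ (n + 1) • x = 0)
    (hsurj : ∀ n, Function.Surjective (π n))
    (hker : ∀ (n : ℕ) (y : M (n + 1)), π n y = 0 ↔ ∃ z : M (n + 1), y = p ^ (n + 1) • z) :
    (∀ n, Function.Surjective (fun x : ↥(towerLimit M π) => (x : ∀ k, M k) n)) ∧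
    (∀ (n : ℕ) (x : ↥(towerLimit M π)),
      (x : ∀ k, M k) n = 0 ↔ ∃ y : ↥(towerLimit M π), x = p ^ (n + 1) • y) ∧
    (∀ x : ↥(towerLimit M π), (∀ n : ℕ, ∃ y : ↥(towerLimit M π), x = p ^ n • y) → x = 0) ∧
    (∀ c : ℕ → ↥(towerLimit M π),
      (∀ n, ∃ y : ↥(towerLimit M π), c (n + 1) - c n = p ^ n • y) →
      ∃ x : ↥(towerLimit M π), ∀ n, ∃ y : ↥(towerLimit M π), x - c n = p ^ n • y) := by
  have coe_smul : ∀ (k : ℕ) (y : ↥(towerLimit M π)) (m : ℕ),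
      ((p ^ k • y : ↥(towerLimit M π)) : ∀ j, M j) m = p ^ k • ((y : ∀ j, M j) m) :=
    fun k y m => rfl
  have h2 : ∀ (n : ℕ) (x : ↥(towerLimit M π)),
      (x : ∀ k, M k) n = 0 ↔ ∃ y : ↥(towerLimit M π), x = p ^ (n + 1) • y := by
    intro n x
    constructor
    · intro h0
      obtain ⟨y, hy, hdy⟩ := tower_divide π htor hsurj hker n (x : ∀ k, M k) x.2 h0
      refine ⟨⟨y, hy⟩, ?_⟩
      ext m
      exact (hdy m).symm
    · rintro ⟨y, rfl⟩
      rw [coe_smul, htor n]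
  refine ⟨?_, h2, ?_, ?_⟩
  · intro n a
    obtain ⟨x, hx, hxa⟩ := tower_proj_surj π hsurj n a
    exact ⟨⟨x, hx⟩, hxa⟩
  · intro x hx
    ext m
    obtain ⟨y, hy⟩ := hx (m + 1)
    have h := congrFun (congrArg Subtype.val hy) m
    rw [coe_smul, htor m] at h
    simpa using h
  · intro c hc
    have stable : ∀ (m k : ℕ), m + 1 ≤ k →
        ((c k : ∀ j, M j) m) = ((c (m + 1) : ∀ j, M j) m) := by
      intro m k hk
      induction k, hk using Nat.le_induction with
      | base => rfl
      | succ k hk ih =>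
          obtain ⟨y, hy⟩ := hc k
          have h := congrFun (congrArg Subtype.val hy) m
          have hz : p ^ k • ((y : ∀ j, M j) m) = 0 := by
            have hk' : p ^ k = p ^ (k - (m + 1)) * p ^ (m + 1) := by
              rw [← pow_add]; congr 1; omega
            rw [hk', mul_smul, htor m, smul_zero]
          have h' : ((c (k + 1) : ∀ j, M j) m) - ((c k : ∀ j, M j) m) = 0 := by
            have e : ((c (k + 1) : ∀ j, M j) m) - ((c k : ∀ j, M j) m)
                = ((c (k + 1) - c k : ↥(towerLimit M π)) : ∀ j, M j) m := rfl
            rw [e, h, coe_smul, hz]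
          rw [sub_eq_zero] at h'
          rw [h', ih]
    have hwmem : (fun m => ((c (m + 1) : ∀ j, M j) m)) ∈ towerLimit M π := by
      intro m
      show π m ((c (m + 2) : ∀ j, M j) (m + 1)) = ((c (m + 1) : ∀ j, M j) m)
      rw [(c (m + 2)).2 m]
      exact stable m (m + 2) (by omega)
    refine ⟨⟨_, hwmem⟩, ?_⟩
    intro n
    match n with
    | 0 =>
        refine ⟨⟨_, hwmem⟩ - c 0, ?_⟩
        rw [pow_zero, one_smul]
    | (m + 1) =>
        have h0 : ((⟨_, hwmem⟩ - c (m + 1) : ↥(towerLimit M π)) : ∀ j, M j) m = 0 := by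
          show ((c (m + 1) : ∀ j, M j) m) - ((c (m + 1) : ∀ j, M j) m) = 0
          rw [sub_self]
        exact (h2 m _).mp h0
end

section
/- Let p be a prime and H an abelian group such that Hom_ℤ(ℤ[1/p], H) = 0. Then the p-adic Tate module of H vanishes: the inverse limit of the system ⋯ → H[p^{n+1}] → H[pⁿ] → ⋯, where H[pⁿ] = {x ∈ H : pⁿx = 0} and the transition maps are multiplication by p, is zero. -/
set_option maxHeartbeats 800000 in
/-- If `Hom_ℤ(ℤ[1/p], H) = 0`, then the `p`-adic Tate module of `H` vanishes:
every compatible sequence `(xₙ)` with `xₙ ∈ H[pⁿ]` and `p·xₙ₊₁ = xₙ` is zero. -/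
theorem statement7 (p : ℕ) (hp : p.Prime) (H : Type*) [AddCommGroup H]
    (hhom : ∀ f : ↥(ZOneOver p) →+ H, f = 0) :
    ∀ x : ℕ → H, (∀ n, p ^ n • x n = 0) → (∀ n, p • x (n + 1) = x n) →
      ∀ n, x n = 0 := by
  intro x _hx hstep
  have hp0 : (p : ℚ) ≠ 0 := Nat.cast_ne_zero.mpr hp.ne_zero
  have hpZ : (p : ℤ) ≠ 0 := Int.natCast_ne_zero.mpr hp.ne_zero
  -- transition lemma: `p^k` carries `x (n+k)` to `x n`
  have hpow : ∀ k n : ℕ, (p : ℤ) ^ k • x (n + k) = x n := by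
    intro k
    induction k with
    | zero => intro n; simp
    | succ k ih =>
      intro n
      rw [show n + (k + 1) = (n + k) + 1 from rfl, pow_succ, mul_smul]
      have h2 : (p : ℤ) • x ((n + k) + 1) = x (n + k) := by
        rw [natCast_zsmul]; exact hstep (n + k)
      rw [h2, ih]
  -- well-definedness of `m / p^n ↦ m • x n`
  have key0 : ∀ (m m' : ℤ) (n n' : ℕ), n ≤ n' →
      (m : ℚ) / (p : ℚ) ^ n = (m' : ℚ) / (p : ℚ) ^ n' → m • x n = m' • x n' := by
    intro m m' n n' hle heq
    have h1 : (m : ℚ) * (p : ℚ) ^ n' = (m' : ℚ) * (p : ℚ) ^ n := by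
      rw [div_eq_div_iff (pow_ne_zero _ hp0) (pow_ne_zero _ hp0)] at heq
      exact heq
    have h2 : (m : ℤ) * (p : ℤ) ^ n' = m' * (p : ℤ) ^ n := by exact_mod_cast h1
    have h3 : m * (p : ℤ) ^ (n' - n) = m' := by
      have hpn : ((p : ℤ) ^ n) ≠ 0 := pow_ne_zero _ hpZ
      have h4 : m * (p : ℤ) ^ (n' - n) * (p : ℤ) ^ n = m' * (p : ℤ) ^ n := by
        rw [mul_assoc, ← pow_add, Nat.sub_add_cancel hle, h2]
      exact mul_right_cancel₀ hpn h4
    calc m • x n = m • ((p : ℤ) ^ (n' - n) • x (n + (n' - n))) := by rw [hpow]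
    _ = m • ((p : ℤ) ^ (n' - n) • x n') := by rw [show n + (n' - n) = n' from by omega]
    _ = (m * (p : ℤ) ^ (n' - n)) • x n' := by rw [smul_smul]
    _ = m' • x n' := by rw [h3]
  have key : ∀ (m m' : ℤ) (n n' : ℕ),
      (m : ℚ) / (p : ℚ) ^ n = (m' : ℚ) / (p : ℚ) ^ n' → m • x n = m' • x n' := by
    intro m m' n n' heq
    rcases le_total n n' with h | h
    · exact key0 m m' n n' h heq
    · exact (key0 m' m n' n h heq.symm).symm
  -- every element of ℤ[1/p] has the form `m / p^n`
  have hex : ∀ z : ZOneOver p, ∃ m : ℤ, ∃ n : ℕ, (z : ℚ) = (m : ℚ) / (p : ℚ) ^ n := by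
    have hex' : ∀ z : ℚ, z ∈ Subring.closure {((p : ℚ))⁻¹} →
        ∃ m : ℤ, ∃ n : ℕ, z = (m : ℚ) / (p : ℚ) ^ n := by
      intro z hz
      refine Subring.closure_induction ?_ ?_ ?_ ?_ ?_ ?_ hz
      · rintro q hq
        rw [Set.mem_singleton_iff] at hq
        exact ⟨1, 1, by simp [hq]⟩
      · exact ⟨0, 0, by simp⟩
      · exact ⟨1, 0, by simp⟩
      · rintro a b _ _ ⟨ma, na, ha⟩ ⟨mb, nb, hb⟩
        refine ⟨ma * (p : ℤ) ^ nb + mb * (p : ℤ) ^ na, na + nb, ?_⟩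
        rw [ha, hb, div_add_div _ _ (pow_ne_zero _ hp0) (pow_ne_zero _ hp0),
          div_eq_div_iff (mul_ne_zero (pow_ne_zero _ hp0) (pow_ne_zero _ hp0))
            (pow_ne_zero _ hp0)]
        push_cast
        ring
      · rintro a _ ⟨ma, na, ha⟩
        exact ⟨-ma, na, by rw [ha]; push_cast; ring⟩
      · rintro a b _ _ ⟨ma, na, ha⟩ ⟨mb, nb, hb⟩
        refine ⟨ma * mb, na + nb, ?_⟩
        rw [ha, hb, div_mul_div_comm, ← pow_add]
        push_cast
        ring
    exact fun z => hex' z z.2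
  choose rm rn hr using hex
  -- the map `z ↦ rm z • x (rn z)` is additive
  have hadd : ∀ a b : ↥(ZOneOver p),
      rm (a + b) • x (rn (a + b)) = rm a • x (rn a) + rm b • x (rn b) := by
    intro a b
    have hab : ((rm (a + b) : ℤ) : ℚ) / (p : ℚ) ^ (rn (a + b)) =
        ((rm a * (p : ℤ) ^ (rn b) + rm b * (p : ℤ) ^ (rn a) : ℤ) : ℚ) /
          (p : ℚ) ^ (rn a + rn b) := by
      rw [← hr (a + b)]
      push_cast
      rw [hr a, hr b, div_add_div _ _ (pow_ne_zero _ hp0) (pow_ne_zero _ hp0),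
        div_eq_div_iff (mul_ne_zero (pow_ne_zero _ hp0) (pow_ne_zero _ hp0))
          (pow_ne_zero _ hp0)]
      push_cast
      ring
    rw [key _ _ _ _ hab, add_smul, ← smul_smul, ← smul_smul]
    congr 1
    · rw [hpow (rn b) (rn a)]
    · rw [add_comm (rn a) (rn b), hpow (rn a) (rn b)]
  let F : ↥(ZOneOver p) →+ H := AddMonoidHom.mk' (fun z => rm z • x (rn z)) hadd
  have hFdef : ∀ w : ↥(ZOneOver p), F w = rm w • x (rn w) := fun _ => rfl
  intro k
  have hmem : ((p : ℚ))⁻¹ ^ k ∈ ZOneOver p := by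
    rw [ZOneOver]
    exact pow_mem (Subring.subset_closure (Set.mem_singleton _)) k
  have hzq : ((rm ⟨((p : ℚ))⁻¹ ^ k, hmem⟩ : ℤ) : ℚ) /
      (p : ℚ) ^ (rn ⟨((p : ℚ))⁻¹ ^ k, hmem⟩) = ((1 : ℤ) : ℚ) / (p : ℚ) ^ k := by
    rw [← hr ⟨((p : ℚ))⁻¹ ^ k, hmem⟩]
    show ((p : ℚ))⁻¹ ^ k = ((1 : ℤ) : ℚ) / (p : ℚ) ^ k
    rw [inv_pow, Int.cast_one, one_div]
  have hFz : F ⟨((p : ℚ))⁻¹ ^ k, hmem⟩ = x k := by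
    rw [hFdef, key _ _ _ _ hzq, one_smul]
  have h0 : F ⟨((p : ℚ))⁻¹ ^ k, hmem⟩ = 0 := by rw [hhom F]; rfl
  rw [← hFz, h0]
end
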